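/- Let θ ∈ (ℂ∖{0})^s and let Q_θ be a finite-dimensional D-invariant subspace of ℂ[z_1,…,z_s]. Then the space P_θ := σ₋ L σ_θ Q_θ = {σ₋(L(σ_θ q)) : q ∈ Q_θ} is translation invariant: if p ∈ P_θ and y ∈ ℂ^s, then the polynomial x ↦ p(x+y) belongs to P_θ. -/

import Mathlib

open MvPolynomial

/-- The formal differential operator `∂^{|β|}/∂z^β` applied to a multivariate polynomial. -/
noncomputable def DOp {s : ℕ} (β : Fin s →₀ ℕ) (f : MvPolynomial (Fin s) ℂ) :
    MvPolynomial (Fin s) ℂ :=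
  ∑ δ ∈ f.support,
    MvPolynomial.monomial (δ - β) (f.coeff δ * ∏ j, (Nat.descFactorial (δ j) (β j) : ℂ))

/-- `q(D) f`: the constant coefficient differential operator associated with `q`. -/
noncomputable def polyD {s : ℕ} (q f : MvPolynomial (Fin s) ℂ) : MvPolynomial (Fin s) ℂ :=
  ∑ β ∈ q.support, q.coeff β • DOp β f

/-- A subspace `Q` is `D`-invariant if `q(D) p ∈ Q` for every `p ∈ Q` and every
polynomial `q`. -/
def DInvariant {s : ℕ} (Q : Submodule ℂ (MvPolynomial (Fin s) ℂ)) : Prop :=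
  ∀ q : MvPolynomial (Fin s) ℂ, ∀ p ∈ Q, polyD q p ∈ Q

/-- The forward shift `(τ_j f)(x) = f(x + ε_j)` as a linear endomorphism. -/
noncomputable def shiftL {s : ℕ} (j : Fin s) :
    Module.End ℂ (MvPolynomial (Fin s) ℂ) :=
  (MvPolynomial.aeval fun i =>
      MvPolynomial.X i + if i = j then 1 else 0 : MvPolynomial (Fin s) ℂ →ₐ[ℂ]
        MvPolynomial (Fin s) ℂ).toLinearMap

/-- The forward difference `Δ_j = τ_j − I`. -/
noncomputable def delta1 {s : ℕ} (j : Fin s) :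
    Module.End ℂ (MvPolynomial (Fin s) ℂ) :=
  shiftL j - 1

/-- The iterated forward difference `Δ^γ = Δ_1^{γ_1} ∘ ⋯ ∘ Δ_s^{γ_s}`. -/
noncomputable def deltaOp {s : ℕ} (γ : Fin s → ℕ) :
    Module.End ℂ (MvPolynomial (Fin s) ℂ) :=
  (List.ofFn fun j => delta1 j ^ γ j).prod

/-- The operator `L`: `(Lf)(x) = Σ_{|γ| ≤ deg f} (Δ^γ f)(0)·x^γ/γ!`. -/
noncomputable def LOp {s : ℕ} (f : MvPolynomial (Fin s) ℂ) : MvPolynomial (Fin s) ℂ :=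
  ∑ γ ∈ (Fintype.piFinset fun _ : Fin s => Finset.range (f.totalDegree + 1)).filter
      (fun γ => ∑ j, γ j ≤ f.totalDegree),
    (MvPolynomial.eval (0 : Fin s → ℂ) (deltaOp γ f) / ∏ j, (Nat.factorial (γ j) : ℂ)) •
      ∏ j, (MvPolynomial.X j : MvPolynomial (Fin s) ℂ) ^ γ j

/-- The scaling operator `(σ_θ f)(z) = f(θ_1 z_1,…,θ_s z_s)`. -/
noncomputable def scaleOp {s : ℕ} (θ : Fin s → ℂ) (f : MvPolynomial (Fin s) ℂ) :
    MvPolynomial (Fin s) ℂ :=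
  MvPolynomial.aeval (fun j => MvPolynomial.C (θ j) * MvPolynomial.X j) f

/-- The space `P_θ = σ₋ L σ_θ Q`. -/
noncomputable def Pspace {s : ℕ} (θ : Fin s → ℂ)
    (Q : Submodule ℂ (MvPolynomial (Fin s) ℂ)) :
    Submodule ℂ (MvPolynomial (Fin s) ℂ) :=
  Submodule.span ℂ
    ((fun q => scaleOp (fun _ => -1) (LOp (scaleOp θ q))) '' (Q : Set (MvPolynomial (Fin s) ℂ)))

/-!
The coefficients of `L f` are `(Δ^γ f)(0) / γ!`, so `L` intertwines differences with derivatives: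
`∂_j (L f) = L (Δ_j f)`. Together with `∂_j σ₋ = -σ₋ ∂_j` and
`Δ_j (σ_θ q) = σ_θ (q(· + θ_j ε_j) - q)` this makes `P_θ` closed under every `∂_j`, provided `Q_θ`
is translation invariant. Both `Q_θ` (being `D`-invariant) and then `P_θ` are translation invariant
by Taylor's formula `p(x + y) = Σ_β y^β / β! · ∂^β p(x)`.
-/

section DOp

variable {s : ℕ}

theorem DOp_eq_sum (β : Fin s →₀ ℕ) (f : MvPolynomial (Fin s) ℂ) :
    DOp β f = (AddMonoidAlgebra.coeff f).sum fun δ c =>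
      monomial (δ - β) (c * ∏ j, (Nat.descFactorial (δ j) (β j) : ℂ)) :=
  rfl

theorem DOp_monomial (β δ : Fin s →₀ ℕ) (a : ℂ) :
    DOp β (monomial δ a) =
      monomial (δ - β) (a * ∏ j, (Nat.descFactorial (δ j) (β j) : ℂ)) := by
  rw [DOp_eq_sum, sum_monomial_eq (by simp)]

theorem DOp_add (β : Fin s →₀ ℕ) (f g : MvPolynomial (Fin s) ℂ) :
    DOp β (f + g) = DOp β f + DOp β g := by
  simp only [DOp_eq_sum, AddMonoidAlgebra.coeff_add]
  exact Finsupp.sum_add_index' (by simp) (by intros; rw [add_mul, map_add])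

theorem DOp_zero (f : MvPolynomial (Fin s) ℂ) : DOp 0 f = f := by
  induction f using MvPolynomial.induction_on' with
  | monomial δ a => simp [DOp_monomial]
  | add f g hf hg => rw [DOp_add, hf, hg]

theorem DOp_add_single (β : Fin s →₀ ℕ) (j : Fin s) (f : MvPolynomial (Fin s) ℂ) :
    DOp (β + Finsupp.single j 1) f = pderiv j (DOp β f) := by
  classical
  induction f using MvPolynomial.induction_on' with
  | monomial δ a =>
    rw [DOp_monomial, DOp_monomial, pderiv_monomial, tsub_add_eq_tsub_tsub, mul_assoc]
    congr 2
    have hfactor (i : Fin s) :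
        ((δ i).descFactorial ((β + Finsupp.single j 1 : Fin s →₀ ℕ) i) : ℂ) =
          (δ i).descFactorial (β i) * if i = j then ((δ - β) j : ℂ) else 1 := by
      rcases eq_or_ne i j with rfl | hij
      · simp [Nat.descFactorial_succ, mul_comm]
      · simp [hij]
    rw [Finset.prod_congr rfl fun i _ => hfactor i, Finset.prod_mul_distrib,
      Finset.prod_ite_eq' Finset.univ j, if_pos (Finset.mem_univ j), Finsupp.tsub_apply]
  | add f g hf hg => rw [DOp_add, DOp_add, hf, hg, map_add]

theorem polyD_monomial_one (β : Fin s →₀ ℕ) (p : MvPolynomial (Fin s) ℂ) :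
    polyD (monomial β 1) p = DOp β p := by
  classical
  simp [polyD, support_monomial]

theorem DOp_mem_of_pderiv_mem {P : Submodule ℂ (MvPolynomial (Fin s) ℂ)}
    (hP : ∀ j, ∀ p ∈ P, pderiv j p ∈ P) (β : Fin s →₀ ℕ) {p : MvPolynomial (Fin s) ℂ}
    (hp : p ∈ P) : DOp β p ∈ P := by
  induction β using WellFoundedLT.induction with
  | ind β ih =>
    rcases eq_or_ne β 0 with rfl | hβ0
    · rwa [DOp_zero]
    obtain ⟨j, hj⟩ : ∃ j, β j ≠ 0 := by simpa [Finsupp.ext_iff] using hβ0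
    have hβ : β = (β - Finsupp.single j 1) + Finsupp.single j 1 := by
      rw [tsub_add_cancel_of_le (Finsupp.single_le_iff.mpr (Nat.one_le_iff_ne_zero.mpr hj))]
    rw [hβ, DOp_add_single]
    refine hP j _ (ih _ (tsub_le_self.lt_of_ne fun h => hj ?_))
    have := DFunLike.congr_fun h j
    simp only [Finsupp.tsub_apply, Finsupp.single_eq_same] at this
    omega

end DOp

section Taylor

variable {s : ℕ}

theorem aeval_X_add_C_monomial (y : Fin s → ℂ) (δ : Fin s →₀ ℕ) (a : ℂ) {N : ℕ}
    (hδ : ∀ i, δ i ≤ N) :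
    aeval (fun i => X i + C (y i)) (monomial δ a) =
      ∑ β ∈ Fintype.piFinset fun _ => Finset.range (N + 1),
        (∏ i, y i ^ β i / (β i).factorial) •
          DOp (Finsupp.equivFunOnFinite.symm β) (monomial δ a) := by
  have hexpand (i : Fin s) : (X i + C (y i)) ^ δ i =
      ∑ k ∈ Finset.range (N + 1), C (y i ^ k * (δ i).choose k) * X i ^ (δ i - k) := by
    rw [add_comm, add_pow]
    refine (Finset.sum_subset (Finset.range_subset_range.mpr (by grind)) fun k _ hk => ?_).trans
      (Finset.sum_congr rfl fun k _ => by simp only [map_mul, map_pow, map_natCast]; ring)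
    simp [Nat.choose_eq_zero_of_lt (by simpa using hk : δ i < k)]
  rw [aeval_monomial, algebraMap_eq, Finsupp.prod_fintype _ _ (by simp),
    Finset.prod_congr rfl fun i _ => hexpand i, Finset.prod_univ_sum, Finset.mul_sum]
  refine Finset.sum_congr rfl fun β _ => ?_
  rw [DOp_monomial, smul_monomial, monomial_eq, Finsupp.prod_fintype _ _ (by simp),
    Finset.prod_mul_distrib, ← map_prod, ← mul_assoc, ← map_mul]
  congr 2
  simp only [Nat.descFactorial_eq_factorial_mul_choose, Nat.cast_mul, Finset.prod_mul_distrib,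
    Finset.prod_div_distrib, Finsupp.coe_equivFunOnFinite_symm, smul_eq_mul]
  have : ∏ i, ((β i).factorial : ℂ) ≠ 0 :=
    Finset.prod_ne_zero_iff.mpr fun i _ => Nat.cast_ne_zero.mpr (Nat.factorial_ne_zero _)
  field_simp

theorem aeval_X_add_C_eq_sum_DOp (y : Fin s → ℂ) (p : MvPolynomial (Fin s) ℂ) :
    aeval (fun i => X i + C (y i)) p =
      ∑ β ∈ Fintype.piFinset fun _ => Finset.range (p.totalDegree + 1),
        (∏ i, y i ^ β i / (β i).factorial) • DOp (Finsupp.equivFunOnFinite.symm β) p := by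
  conv_lhs => rw [← support_sum_monomial_coeff p]
  rw [map_sum, Finset.sum_congr rfl fun δ hδ => aeval_X_add_C_monomial y δ _ fun i =>
    (monomial_le_degreeOf i hδ).trans (degreeOf_le_totalDegree p i), Finset.sum_comm]
  refine Finset.sum_congr rfl fun β _ => ?_
  rw [← Finset.smul_sum]
  congr 1
  conv_rhs => rw [← support_sum_monomial_coeff p]
  exact (map_sum (AddMonoidHom.mk' _ (DOp_add _)) _ _).symm

theorem aeval_X_add_C_mem_of_pderiv_mem {P : Submodule ℂ (MvPolynomial (Fin s) ℂ)}
    (hP : ∀ j, ∀ p ∈ P, pderiv j p ∈ P) (y : Fin s → ℂ) {p : MvPolynomial (Fin s) ℂ}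
    (hp : p ∈ P) : aeval (fun i => X i + C (y i)) p ∈ P := by
  rw [aeval_X_add_C_eq_sum_DOp]
  exact P.sum_mem fun β _ => P.smul_mem _ (DOp_mem_of_pderiv_mem hP _ hp)

end Taylor

open scoped IsMulCommutative in
theorem List.prod_ofFn_pow_add_single {M : Type*} [Monoid M] {n : ℕ} {f : Fin n → M}
    (hf : ∀ i j, Commute (f i) (f j)) (γ : Fin n → ℕ) (j : Fin n) :
    (List.ofFn fun i => f i ^ (γ + Pi.single j 1 : Fin n → ℕ) i).prod =
      (List.ofFn fun i => f i ^ γ i).prod * f j := by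
  let S := Submonoid.closure (Set.range f)
  have : IsMulCommutative S := Submonoid.isMulCommutative_closure _ <| by
    rintro _ ⟨i, rfl⟩ _ ⟨k, rfl⟩
    exact hf i k
  let g : Fin n → S := fun i => ⟨f i, Submonoid.subset_closure ⟨i, rfl⟩⟩
  have hprod (δ : Fin n → ℕ) :
      (List.ofFn fun i => f i ^ δ i).prod = ((∏ i, g i ^ δ i : S) : M) := by
    rw [← List.prod_ofFn, SubmonoidClass.coe_list_prod, List.map_ofFn]
    rfl
  have hbump : ∏ i, g i ^ (γ + Pi.single j 1 : Fin n → ℕ) i = (∏ i, g i ^ γ i) * g j := by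
    simp only [Pi.add_apply, pow_add, Finset.prod_mul_distrib, Pi.single_apply, pow_ite, pow_one,
      pow_zero, Finset.prod_ite_eq', Finset.mem_univ, if_true]
  rw [hprod, hprod, hbump, Submonoid.coe_mul]

section Difference

variable {s : ℕ}

theorem shiftL_apply (j : Fin s) (p : MvPolynomial (Fin s) ℂ) :
    shiftL j p = aeval (fun i => X i + if i = j then 1 else 0) p :=
  rfl

theorem shiftL_commute (i j : Fin s) : Commute (shiftL i) (shiftL j) := by
  have h : (aeval fun k => X k + if k = i then 1 else 0 :
      MvPolynomial (Fin s) ℂ →ₐ[ℂ] MvPolynomial (Fin s) ℂ).comp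
        (aeval fun k => X k + if k = j then 1 else 0) =
      (aeval fun k => X k + if k = j then 1 else 0).comp
        (aeval fun k => X k + if k = i then 1 else 0) := by
    ext k
    by_cases hi : k = i <;> by_cases hj : k = j <;> simp [hi, hj] <;> ring
  exact LinearMap.ext (AlgHom.congr_fun h)

theorem delta1_commute (i j : Fin s) : Commute (delta1 i) (delta1 j) :=
  ((shiftL_commute i j).sub_right (Commute.one_right _)).sub_left (Commute.one_left _)

theorem deltaOp_add_single (γ : Fin s → ℕ) (j : Fin s) :
    deltaOp (γ + Pi.single j 1) = deltaOp γ * delta1 j :=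
  List.prod_ofFn_pow_add_single delta1_commute γ j

theorem shiftL_monomial_of_eq_zero {j : Fin s} {δ : Fin s →₀ ℕ} (hδ : δ j = 0) (a : ℂ) :
    shiftL j (monomial δ a) = monomial δ a := by
  rw [shiftL_apply, aeval_monomial, monomial_eq, algebraMap_eq]
  congr 1
  refine Finsupp.prod_congr fun i hi => ?_
  rw [if_neg (by rintro rfl; exact Finsupp.mem_support_iff.mp hi hδ), add_zero]

theorem delta1_monomial (j : Fin s) (δ : Fin s →₀ ℕ) (a : ℂ) :
    delta1 j (monomial δ a) =
      monomial (δ.erase j) a * ((X j + 1) ^ δ j - X j ^ δ j) := by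
  have hsplit : monomial δ a = monomial (δ.erase j) a * X j ^ δ j := by
    rw [X_pow_eq_monomial, monomial_mul, mul_one, Finsupp.erase_add_single]
  have hshift : shiftL j (X j ^ δ j : MvPolynomial (Fin s) ℂ) = (X j + 1) ^ δ j := by
    simp [shiftL_apply]
  rw [delta1, LinearMap.sub_apply, Module.End.one_apply, hsplit, shiftL_apply, map_mul,
    ← shiftL_apply, ← shiftL_apply, hshift, shiftL_monomial_of_eq_zero (by simp), mul_sub]

theorem totalDegree_X_add_one_pow_sub_le (j : Fin s) (n : ℕ) :
    ((X j + 1) ^ n - X j ^ n : MvPolynomial (Fin s) ℂ).totalDegree ≤ n - 1 := by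
  rw [add_pow, Finset.sum_range_succ, Nat.choose_self, Nat.cast_one, one_pow, mul_one, mul_one,
    add_sub_cancel_right]
  refine (totalDegree_finsetSum _ _).trans (Finset.sup_le fun k hk => ?_)
  rw [one_pow, mul_one, ← map_natCast C]
  refine (totalDegree_mul _ _).trans ?_
  simp only [totalDegree_X_pow, totalDegree_C]
  grind

theorem totalDegree_delta1_le (j : Fin s) (f : MvPolynomial (Fin s) ℂ) :
    (delta1 j f).totalDegree ≤ f.totalDegree - 1 := by
  conv_lhs => rw [← support_sum_monomial_coeff f]
  rw [map_sum]
  refine (totalDegree_finsetSum _ _).trans (Finset.sup_le fun δ hδ => ?_)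
  have hδf : δ.degree ≤ f.totalDegree := le_totalDegree hδ
  rw [delta1_monomial]
  rcases Nat.eq_zero_or_pos (δ j) with hj | hj
  · simp [hj]
  have hdeg : (δ.erase j).degree + δ j = δ.degree := by
    rw [← Finsupp.degree_single j (δ j), ← map_add, Finsupp.erase_add_single]
  calc _ ≤ (monomial (δ.erase j) (coeff δ f)).totalDegree +
        ((X j + 1) ^ δ j - X j ^ δ j : MvPolynomial (Fin s) ℂ).totalDegree :=
        totalDegree_mul _ _
    _ ≤ (δ.erase j).degree + (δ j - 1) :=
        add_le_add (totalDegree_monomial_le _ _) (totalDegree_X_add_one_pow_sub_le _ _)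
    _ ≤ f.totalDegree - 1 := by omega

theorem delta1_eq_zero_of_totalDegree_eq_zero (j : Fin s) {f : MvPolynomial (Fin s) ℂ}
    (hf : f.totalDegree = 0) : delta1 j f = 0 := by
  rw [totalDegree_eq_zero_iff_eq_C.mp hf]
  simp [delta1, shiftL_apply]

theorem deltaOp_eq_zero_of_totalDegree_lt (γ : Fin s → ℕ) {f : MvPolynomial (Fin s) ℂ}
    (h : f.totalDegree < ∑ i, γ i) : deltaOp γ f = 0 := by
  induction γ using WellFoundedLT.induction generalizing f with
  | ind γ ih =>
    obtain ⟨j, hj⟩ : ∃ j, γ j ≠ 0 := by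
      by_contra! hγ
      simp [hγ] at h
    have hγ : γ = (γ - Pi.single j 1) + Pi.single j 1 := by
      ext i
      rcases eq_or_ne i j with rfl | hij
      · simp only [Pi.add_apply, Pi.sub_apply, Pi.single_eq_same]
        omega
      · simp [hij]
    have hsum : ∑ i, γ i = ∑ i, (γ - Pi.single j 1 : Fin s → ℕ) i + 1 := by
      conv_lhs => rw [hγ]
      simp [Finset.sum_add_distrib]
    rw [hγ, deltaOp_add_single, Module.End.mul_apply]
    rcases Nat.eq_zero_or_pos f.totalDegree with h0 | hpos
    · rw [delta1_eq_zero_of_totalDegree_eq_zero j h0, map_zero]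
    refine ih _ (tsub_le_self.lt_of_ne fun h => hj ?_) ?_
    · have := congr_fun h j
      simp only [Pi.sub_apply, Pi.single_eq_same] at this
      omega
    · have := totalDegree_delta1_le j f
      omega

end Difference

section LOp

variable {s : ℕ}

theorem prod_X_pow_eq_monomial_equivFunOnFinite (γ : Fin s → ℕ) :
    ∏ j, (X j : MvPolynomial (Fin s) ℂ) ^ γ j = monomial (Finsupp.equivFunOnFinite.symm γ) 1 := by
  rw [monomial_eq, C_1, one_mul, Finsupp.prod_fintype _ _ (by simp)]
  rfl

theorem coeff_LOp (f : MvPolynomial (Fin s) ℂ) (γ : Fin s →₀ ℕ) :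
    coeff γ (LOp f) = eval 0 (deltaOp γ f) / ∏ j, ((γ j).factorial : ℂ) := by
  classical
  have hcoeff (γ' : Fin s → ℕ) :
      coeff γ (∏ j, (X j : MvPolynomial (Fin s) ℂ) ^ γ' j) = if ⇑γ = γ' then 1 else 0 := by
    rw [prod_X_pow_eq_monomial_equivFunOnFinite, coeff_monomial]
    exact if_congr ((Equiv.symm_apply_eq _).trans eq_comm) rfl rfl
  simp only [LOp, coeff_sum, coeff_smul, hcoeff, smul_eq_mul, mul_ite, mul_one, mul_zero,
    Finset.sum_ite_eq]
  split_ifs with hγ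
  · rfl
  -- outside the summation range of `LOp f`, `Δ^γ f` vanishes for degree reasons
  rw [deltaOp_eq_zero_of_totalDegree_lt, map_zero, zero_div]
  simp only [Finset.mem_filter, Fintype.mem_piFinset, Finset.mem_range, not_and, not_le] at hγ
  by_contra! hle
  have hγi (i : Fin s) : γ i < f.totalDegree + 1 :=
    Nat.lt_succ_of_le
      ((Finset.single_le_sum (fun _ _ => Nat.zero_le _) (Finset.mem_univ i)).trans hle)
  exact (hγ hγi).not_ge hle

theorem pderiv_LOp (j : Fin s) (f : MvPolynomial (Fin s) ℂ) :
    pderiv j (LOp f) = LOp (delta1 j f) := by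
  ext m
  have hm : ⇑(m + Finsupp.single j 1 : Fin s →₀ ℕ) = ⇑m + Pi.single j 1 := by
    rw [Finsupp.coe_add, Finsupp.single_eq_pi_single]
  have hfactorial (i : Fin s) : (((⇑m + Pi.single j 1 : Fin s → ℕ) i).factorial : ℂ) =
      (m i).factorial * if i = j then (m j + 1 : ℂ) else 1 := by
    rcases eq_or_ne i j with rfl | hij
    · simp [Nat.factorial_succ, mul_comm]
    · simp [hij]
  rw [coeff_pderiv, coeff_LOp, coeff_LOp, hm, deltaOp_add_single, Module.End.mul_apply,
    Finset.prod_congr rfl fun i _ => hfactorial i, Finset.prod_mul_distrib, Finset.prod_ite_eq',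
    if_pos (Finset.mem_univ j)]
  have : ∏ i, ((m i).factorial : ℂ) ≠ 0 :=
    Finset.prod_ne_zero_iff.mpr fun i _ => Nat.cast_ne_zero.mpr (Nat.factorial_ne_zero _)
  field_simp

end LOp

section Scaling

variable {s : ℕ}

theorem scaleOp_monomial (c : Fin s → ℂ) (δ : Fin s →₀ ℕ) (a : ℂ) :
    scaleOp c (monomial δ a) = monomial δ (a * ∏ i, c i ^ δ i) := by
  rw [scaleOp, aeval_monomial, Finsupp.prod_fintype _ _ (by simp), monomial_eq,
    Finsupp.prod_fintype _ _ (by simp)]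
  simp only [mul_pow, Finset.prod_mul_distrib, ← map_pow, ← map_prod, algebraMap_eq, map_mul]
  ring

theorem coeff_scaleOp (c : Fin s → ℂ) (f : MvPolynomial (Fin s) ℂ) (δ : Fin s →₀ ℕ) :
    coeff δ (scaleOp c f) = coeff δ f * ∏ i, c i ^ δ i := by
  classical
  induction f using MvPolynomial.induction_on' with
  | monomial δ' a =>
    rw [scaleOp_monomial, coeff_monomial, coeff_monomial]
    split_ifs with h
    · rw [h]
    · rw [zero_mul]
  | add f g hf hg => rw [scaleOp, map_add, coeff_add, ← scaleOp, ← scaleOp, hf, hg, coeff_add,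
      add_mul]

theorem pderiv_scaleOp (c : Fin s → ℂ) (j : Fin s) (f : MvPolynomial (Fin s) ℂ) :
    pderiv j (scaleOp c f) = c j • scaleOp c (pderiv j f) := by
  ext m
  have hpow (i : Fin s) : c i ^ (m + Finsupp.single j 1 : Fin s →₀ ℕ) i =
      c i ^ m i * if i = j then c j else 1 := by
    rcases eq_or_ne i j with rfl | hij
    · simp [pow_succ]
    · simp [hij]
  rw [coeff_smul, coeff_pderiv, coeff_scaleOp, coeff_scaleOp, coeff_pderiv,
    Finset.prod_congr rfl fun i _ => hpow i, Finset.prod_mul_distrib, Finset.prod_ite_eq',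
    if_pos (Finset.mem_univ j), smul_eq_mul]
  ring

theorem delta1_scaleOp (θ : Fin s → ℂ) (j : Fin s) (q : MvPolynomial (Fin s) ℂ) :
    delta1 j (scaleOp θ q) =
      scaleOp θ (aeval (fun i => X i + C (Pi.single j (θ j) i)) q - q) := by
  have h : (aeval fun i => X i + if i = j then 1 else 0 :
      MvPolynomial (Fin s) ℂ →ₐ[ℂ] MvPolynomial (Fin s) ℂ).comp
        (aeval fun i => C (θ i) * X i) =
      (aeval fun i => C (θ i) * X i).comp (aeval fun i => X i + C (Pi.single j (θ j) i)) := by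
    ext i
    rcases eq_or_ne i j with rfl | hij
    · simp [mul_add]
    · simp [hij]
  rw [delta1, LinearMap.sub_apply, Module.End.one_apply, shiftL_apply, scaleOp, scaleOp, map_sub,
    ← AlgHom.comp_apply, h, AlgHom.comp_apply]

end Scaling

theorem DInvariant.pderiv_mem {s : ℕ} {Q : Submodule ℂ (MvPolynomial (Fin s) ℂ)}
    (hQ : DInvariant Q) (j : Fin s) {q : MvPolynomial (Fin s) ℂ} (hq : q ∈ Q) :
    pderiv j q ∈ Q := by
  have h := hQ (X j) q hq
  rwa [X, polyD_monomial_one, ← zero_add (Finsupp.single j 1), DOp_add_single, DOp_zero] at h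

theorem pderiv_mem_Pspace {s : ℕ} (θ : Fin s → ℂ) {Q : Submodule ℂ (MvPolynomial (Fin s) ℂ)}
    (hQ : ∀ j, ∀ q ∈ Q, pderiv j q ∈ Q) (j : Fin s) {p : MvPolynomial (Fin s) ℂ}
    (hp : p ∈ Pspace θ Q) : pderiv j p ∈ Pspace θ Q := by
  refine (Submodule.span_le.mpr ?_ : Pspace θ Q ≤ (Pspace θ Q).comap (pderiv j).toLinearMap) hp
  rintro _ ⟨q, hq, rfl⟩
  have hdiff : aeval (fun i => X i + C (Pi.single j (θ j) i)) q - q ∈ Q :=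
    Q.sub_mem (aeval_X_add_C_mem_of_pderiv_mem hQ _ hq) hq
  simp only [SetLike.mem_coe, Submodule.mem_comap, Derivation.coeFn_coe]
  rw [pderiv_scaleOp, pderiv_LOp, delta1_scaleOp]
  exact Submodule.smul_mem _ _ (Submodule.subset_span ⟨_, hdiff, rfl⟩)

theorem stmt7_general {s : ℕ} (θ : Fin s → ℂ)
    (Q : Submodule ℂ (MvPolynomial (Fin s) ℂ))
    (hQ : DInvariant Q) :
    ∀ p ∈ Pspace θ Q, ∀ y : Fin s → ℂ,
      MvPolynomial.aeval (fun j => MvPolynomial.X j + MvPolynomial.C (y j)) p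
        ∈ Pspace θ Q := by
  intro p hp y
  have hQ_pderiv : ∀ j, ∀ q ∈ Q, pderiv j q ∈ Q := fun j _ => hQ.pderiv_mem j
  exact aeval_X_add_C_mem_of_pderiv_mem (fun j _ => pderiv_mem_Pspace θ hQ_pderiv j) y hp

/-- for `θ ∈ (ℂ∖{0})^s` and a finite-dimensional `D`-invariant `Q_θ`, the
space `P_θ = σ₋ L σ_θ Q_θ` is translation invariant. -/
theorem stmt7 {s : ℕ} (θ : Fin s → ℂ) (hθ : ∀ j, θ j ≠ 0)
    (Q : Submodule ℂ (MvPolynomial (Fin s) ℂ)) [FiniteDimensional ℂ Q]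
    (hQ : DInvariant Q) :
    ∀ p ∈ Pspace θ Q, ∀ y : Fin s → ℂ,
      MvPolynomial.aeval (fun j => MvPolynomial.X j + MvPolynomial.C (y j)) p
        ∈ Pspace θ Q :=
  stmt7_general θ Q hQ
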